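/- arXiv:1906.04475 — 3 statements merged into one kernel-verified Lean document; each statement's English description precedes it below -/
import Mathlib

section
/- Let k be an algebraically closed field, O = k[[t]], and let (V, F•, θ) be a local parabolic triple: V is a free O-module of rank r with filtration V = V⁰ ⊃ V¹ ⊃ ⋯ ⊃ V^σ = t·V, with dim_k(V^{i−1}/V^{i}) = m_i, the m_i rearranged decreasingly give a partition n₁ ≥ ⋯ ≥ n_σ of r with conjugate partition μ₁ ≥ ⋯ ≥ μ_{n₁}; θ ∈ End_O(V) satisfies θ(V^i) ⊆ V^{i+1} for 0 ≤ i ≤ σ−1; and the characteristic polynomial of θ factors as f = ∏_{i=1}^{n₁} f_i in O[λ], where each f_i is an Eisenstein polynomial of degree μ_i and for i ≠ j the difference of the constant terms of f_i and f_j lies in t·k[[t]] but not in t²·k[[t]]. For 1 < i ≤ n₁, let q_i : V → V/Ker f_i(θ) be the quotient map, where Ker f_i(θ) = { v ∈ V : f_i(θ)(v) = 0 }. Then the image of Ker f₁(θ) under q_i equals the kernel of the endomorphism of V/Ker f_i(θ) induced by f₁(θ). In particular, the sum Ker f₁(θ) + Ker f_i(θ) is direct and is a direct summand of V. -/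
/-!
Writing `f₁ = λ^σ + t a` and `fᵢ = λ^d + t b` (with `d ≤ σ`) gives `f₁ = λ^(σ-d) fᵢ + t ρ`, and the
conditions on the constant terms (Eisenstein for `f₁`, non-congruence mod `t²` when `d = σ`) make
`ρ(0)` a unit. Since `θ^σ V ⊆ tV`, `θ` is nilpotent modulo `t`, so `ρ(θ)` is surjective modulo `t`,
hence surjective by Nakayama, hence an automorphism of the finite module `V`.

On `Ker fᵢ(θ)` the map `f₁(θ)` equals `t ρ(θ)`, which is injective: the sum is direct. As
`f₁(θ) V ⊆ t V`, a vector `v` with `fᵢ(θ) f₁(θ) v = 0` has `f₁(θ) v = t w` with `w ∈ Ker fᵢ(θ)`,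
and `w = ρ(θ) z` with `z ∈ Ker fᵢ(θ)`, so `v - z ∈ Ker f₁(θ)`. Hence
`Ker f₁(θ) + Ker fᵢ(θ) = Ker (fᵢ f₁)(θ)`, which gives the description of the image. The quotient
of `V` by this kernel embeds into `V`, so it is torsion-free, hence free over the PID `k[[t]]`, and
the kernel is a direct summand.
-/

open Pointwise Polynomial LinearMap

namespace Polynomial

variable {R : Type*} [CommRing R] {π : R}

theorem IsWeaklyEisensteinAt.C_dvd_sub_X_pow {f : R[X]}
    (hf : f.IsWeaklyEisensteinAt (Ideal.span {π})) (hm : f.Monic) :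
    C π ∣ f - X ^ f.natDegree := by
  rw [C_dvd_iff_dvd_coeff]
  intro m
  rw [coeff_sub, coeff_X_pow]
  rcases lt_trichotomy m f.natDegree with h | rfl | h
  · simpa [h.ne] using Ideal.mem_span_singleton.1 (hf.mem h)
  · simp [hm.coeff_natDegree]
  · simp [coeff_eq_zero_of_natDegree_lt h, h.ne']

theorem coeff_zero_eq_mul_of_sub_X_pow_eq {f a : R[X]} {d : ℕ} (hd : 0 < d)
    (ha : f - X ^ d = C π * a) : f.coeff 0 = π * a.coeff 0 := by
  simpa [eq_comm (a := 0), hd.ne'] using congrArg (coeff · 0) ha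

theorem exists_eq_mul_add_C_mul_of_isEisensteinAt {f g : R[X]} (hfm : f.Monic) (hgm : g.Monic)
    (hf : f.IsEisensteinAt (Ideal.span {π})) (hg : g.IsEisensteinAt (Ideal.span {π}))
    (hg0 : 0 < g.natDegree) (hdeg : g.natDegree ≤ f.natDegree)
    (hfg : f.coeff 0 - g.coeff 0 ∉ Ideal.span {π} ^ 2) :
    ∃ q ρ : R[X], f = g * q + C π * ρ ∧ ρ.coeff 0 ∉ Ideal.span {π} := by
  obtain ⟨a, ha⟩ := hf.isWeaklyEisensteinAt.C_dvd_sub_X_pow hfm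
  obtain ⟨b, hb⟩ := hg.isWeaklyEisensteinAt.C_dvd_sub_X_pow hgm
  have hf0 := coeff_zero_eq_mul_of_sub_X_pow_eq (hg0.trans_le hdeg) ha
  have hg0' := coeff_zero_eq_mul_of_sub_X_pow_eq hg0 hb
  have hsq : ∀ c ∈ Ideal.span {π}, π * c ∈ Ideal.span {π} ^ 2 := fun c hc =>
    pow_two (Ideal.span {π}) ▸ Ideal.mul_mem_mul (Ideal.mem_span_singleton_self π) hc
  obtain ⟨e, he⟩ := Nat.exists_eq_add_of_le hdeg
  rw [he, pow_add] at ha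
  refine ⟨X ^ e, a - X ^ e * b, by linear_combination ha - X ^ e * hb, fun hρ => ?_⟩
  rcases e with _ | e
  · exact hfg (by simpa [hf0, hg0', mul_sub] using hsq _ hρ)
  · exact hf.notMem (by simpa [hf0, coeff_X_pow_mul'] using hsq _ hρ)

theorem exists_X_pow_dvd_mul_sub_one {u : R[X]} (hu : IsUnit (u.coeff 0)) (n : ℕ) :
    ∃ P : R[X], X ^ n ∣ u * P - 1 := by
  let mk := Ideal.Quotient.mk (Ideal.span {(X : R[X]) ^ n})
  have hX : IsNilpotent (mk X) :=
    ⟨n, by rw [← map_pow, Ideal.Quotient.eq_zero_iff_mem]; exact Ideal.mem_span_singleton_self _⟩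
  obtain ⟨s, hs⟩ := X_dvd_sub_C (p := u)
  have hunit : IsUnit (mk u) := by
    rw [eq_add_of_sub_eq hs, map_add, map_mul]
    exact ((Commute.all _ _).isNilpotent_mul_right hX).isUnit_add_right_of_commute
      (hu.map (mk.comp C)) (Commute.all _ _)
  obtain ⟨P', hP'⟩ := hunit.exists_right_inv
  obtain ⟨P, rfl⟩ := Ideal.Quotient.mk_surjective P'
  refine ⟨P, Ideal.mem_span_singleton.1 (Ideal.Quotient.eq.1 ?_)⟩
  simpa using hP'

end Polynomial

section

variable {R M : Type*} [CommRing R] [AddCommGroup M] [Module R M] {π : R}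

theorem range_pow_le_of_map_le {θ : Module.End R M} {W : ℕ → Submodule R M} (hW0 : W 0 = ⊤) :
    ∀ {σ : ℕ}, (∀ i < σ, (W i).map θ ≤ W (i + 1)) → range (θ ^ σ) ≤ W σ
  | 0, _ => by simp [hW0]
  | σ + 1, hθ => by
    rw [pow_succ', Module.End.mul_eq_comp, range_comp]
    exact (Submodule.map_mono (range_pow_le_of_map_le hW0 fun i hi => hθ i (by omega))).trans
      (hθ σ σ.lt_succ_self)

theorem range_aeval_le_smul_top {θ : Module.End R M} {f : R[X]}
    (hf : f.IsWeaklyEisensteinAt (Ideal.span {π})) (hm : f.Monic)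
    (hθ : range (θ ^ f.natDegree) ≤ π • ⊤) : range (aeval θ f) ≤ π • ⊤ := by
  obtain ⟨a, ha⟩ := hf.C_dvd_sub_X_pow hm
  rintro _ ⟨v, rfl⟩
  rw [sub_eq_iff_eq_add'.1 ha, map_add, aeval_X_pow, ← smul_eq_C_mul, map_smul,
    LinearMap.add_apply, LinearMap.smul_apply]
  exact add_mem (hθ ⟨v, rfl⟩) (Submodule.smul_mem_pointwise_smul _ _ _ trivial)

theorem aeval_apply_eq_smul_of_mem_ker {θ : Module.End R M} {f g q ρ : R[X]}
    (hf : f = g * q + C π * ρ) {z : M} (hz : z ∈ ker (aeval θ g)) :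
    aeval θ f z = π • aeval θ ρ z := by
  rw [hf, mul_comm, map_add, map_mul, ← smul_eq_C_mul, map_smul, LinearMap.add_apply,
    Module.End.mul_apply, mem_ker.1 hz, map_zero, zero_add, LinearMap.smul_apply]

theorem bijective_aeval_of_isUnit_coeff_zero [Module.Finite R M]
    (hπ : π ∈ Ideal.jacobson ⊥) {θ : Module.End R M} {n : ℕ} (hθ : range (θ ^ n) ≤ π • ⊤)
    {u : R[X]} (hu : IsUnit (u.coeff 0)) : Function.Bijective (aeval θ u) := by
  suffices hsurj : Function.Surjective (aeval θ u) from
    ⟨OrzechProperty.injective_of_surjective_endomorphism _ hsurj, hsurj⟩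
  refine range_eq_top.1 (top_le_iff.1 (Submodule.le_of_le_smul_of_le_jacobson_bot
    Module.Finite.fg_top ((Ideal.span_singleton_le_iff_mem _).2 hπ) ?_))
  rw [Submodule.ideal_span_singleton_smul]
  obtain ⟨P, g, hPg⟩ := exists_X_pow_dvd_mul_sub_one hu n
  intro v _
  have hv : aeval θ u (aeval θ P v) = v + (θ ^ n) (aeval θ g v) := by
    simpa [sub_eq_iff_eq_add', Module.End.mul_apply] using congrArg (aeval θ · v) hPg
  rw [eq_sub_of_add_eq hv.symm]
  exact sub_mem (Submodule.mem_sup_left ⟨_, rfl⟩) (Submodule.mem_sup_right (hθ ⟨_, rfl⟩))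

variable {A B e : Module.End R M}

theorem comap_ker_eq_ker_sup_ker (hπ : IsSMulRegular M π) (hA : range A ≤ π • ⊤)
    (hAB : Commute A B) (he : Function.Bijective e) (hBe : Commute B e)
    (hAe : ∀ z ∈ ker B, A z = π • e z) : (ker B).comap A = ker A ⊔ ker B := by
  refine le_antisymm (fun v hv => ?_) (sup_le (fun v hv => ?_) fun z hz => ?_)
  · obtain ⟨w, -, hw⟩ := (Submodule.mem_smul_pointwise_iff_exists _ _ _).1 (hA ⟨v, rfl⟩)
    have hBw : B w = 0 := hπ.right_eq_zero_of_smul <| by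
      rw [← map_smul, hw]; exact hv
    obtain ⟨z, rfl⟩ := he.2 w
    have hz : z ∈ ker B := he.1 <| by
      rw [map_zero, ← Module.End.mul_apply, ← hBe.eq, Module.End.mul_apply, hBw]
    have hvz : v - z ∈ ker A := by rw [mem_ker, map_sub, ← hw, hAe z hz, sub_self]
    simpa using Submodule.add_mem_sup hvz hz
  · simp [Submodule.mem_comap, mem_ker.1 hv]
  · rw [Submodule.mem_comap, mem_ker, ← Module.End.mul_apply, ← hAB.eq, Module.End.mul_apply,
      mem_ker.1 hz, map_zero]

theorem disjoint_ker_of_eq_smul (hπ : IsSMulRegular M π) (he : Function.Injective e)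
    (hAe : ∀ z ∈ ker B, A z = π • e z) : Disjoint (ker A) (ker B) := by
  refine Submodule.disjoint_def.2 fun v hA hB => he ?_
  rw [map_zero]
  exact hπ.right_eq_zero_of_smul (by rw [← hAe v hB, mem_ker.1 hA])

end

theorem LinearMap.exists_isCompl_ker {R M N : Type*} [Ring R] [AddCommGroup M] [Module R M]
    [AddCommGroup N] [Module R N] (g : M →ₗ[R] N) [Module.Projective R (range g)] :
    ∃ U : Submodule R M, IsCompl (ker g) U := by
  obtain ⟨s, hs⟩ := g.rangeRestrict.exists_rightInverse_of_surjective g.range_rangeRestrict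
  have hidem : IsIdempotentElem (s ∘ₗ g.rangeRestrict) := by
    change s ∘ₗ (g.rangeRestrict ∘ₗ s) ∘ₗ g.rangeRestrict = s ∘ₗ g.rangeRestrict
    rw [hs, LinearMap.id_comp]
  have hker : ker (s ∘ₗ g.rangeRestrict) = ker g := by
    rw [ker_comp_of_ker_eq_bot _ (ker_eq_bot_of_inverse hs), ker_rangeRestrict]
  exact ⟨_, hker ▸ hidem.isCompl.symm⟩

theorem Submodule.map_mkQ_ker_eq_ker_mapQ {R M : Type*} [Ring R] [AddCommGroup M]
    [Module R M] {p : Submodule R M} {A : Module.End R M} (h : p ≤ p.comap A)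
    (hle : p.comap A ≤ ker A ⊔ p) : (ker A).map p.mkQ = ker (p.mapQ p A h) := by
  rw [ker_mapQ]
  refine le_antisymm (map_mono fun v hv => ?_) ?_
  · simp [mem_comap, mem_ker.1 hv]
  · simpa [map_sup, mkQ_map_self] using map_mono (f := p.mkQ) hle

theorem parabolic_local_first_step {k : Type*} [Field k]
    {V : Type*} [AddCommGroup V] [Module (PowerSeries k) V]
    [Module.Free (PowerSeries k) V] [Module.Finite (PowerSeries k) V]
    (σ : ℕ) (hσ : 1 ≤ σ)
    (W : ℕ → Submodule (PowerSeries k) V)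
    (hW0 : W 0 = ⊤)
    (hWσ : W σ = (PowerSeries.X : PowerSeries k) • (⊤ : Submodule (PowerSeries k) V))
    (n : ℕ → ℕ)
    (hpos : ∀ i, 1 ≤ i → i ≤ σ → 0 < n i)
    (μ : ℕ → ℕ)
    (hμ : ∀ t, μ t = ((Finset.Icc 1 σ).filter (fun l => t ≤ n l)).card)
    (θ : Module.End (PowerSeries k) V)
    (hθ : ∀ i < σ, Submodule.map θ (W i) ≤ W (i + 1))
    (f : ℕ → Polynomial (PowerSeries k))
    (hmonic : ∀ i, 1 ≤ i → i ≤ n 1 → (f i).Monic)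
    (hdeg : ∀ i, 1 ≤ i → i ≤ n 1 → (f i).natDegree = μ i)
    (hEis : ∀ i, 1 ≤ i → i ≤ n 1 →
      (f i).IsEisensteinAt (Ideal.span {(PowerSeries.X : PowerSeries k)}))
    (hconst : ∀ i j, 1 ≤ i → i ≤ n 1 → 1 ≤ j → j ≤ n 1 → i ≠ j →
      ((f i).coeff 0 - (f j).coeff 0) ∈ Ideal.span {(PowerSeries.X : PowerSeries k)} ∧
      ((f i).coeff 0 - (f j).coeff 0) ∉ Ideal.span {(PowerSeries.X : PowerSeries k)} ^ 2) :
    ∀ i, 1 < i → i ≤ n 1 →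
      Submodule.map (LinearMap.ker (Polynomial.aeval θ (f i))).mkQ
          (LinearMap.ker (Polynomial.aeval θ (f 1)))
        = LinearMap.ker (Submodule.mapQ (LinearMap.ker (Polynomial.aeval θ (f i)))
            (LinearMap.ker (Polynomial.aeval θ (f i))) (Polynomial.aeval θ (f 1))
            (fun x hx => by
              have hcomm : Polynomial.aeval θ (f i) * Polynomial.aeval θ (f 1)
                  = Polynomial.aeval θ (f 1) * Polynomial.aeval θ (f i) := by
                rw [← map_mul, ← map_mul, mul_comm]
              have hx0 : Polynomial.aeval θ (f i) x = 0 := LinearMap.mem_ker.mp hx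
              have : Polynomial.aeval θ (f i) (Polynomial.aeval θ (f 1) x) = 0 := by
                calc Polynomial.aeval θ (f i) (Polynomial.aeval θ (f 1) x)
                    = (Polynomial.aeval θ (f i) * Polynomial.aeval θ (f 1)) x := rfl
                  _ = (Polynomial.aeval θ (f 1) * Polynomial.aeval θ (f i)) x := by
                      rw [hcomm]
                  _ = Polynomial.aeval θ (f 1) (Polynomial.aeval θ (f i) x) := rfl
                  _ = 0 := by rw [hx0, map_zero]
              exact LinearMap.mem_ker.mpr this)) ∧
      Disjoint (LinearMap.ker (Polynomial.aeval θ (f 1)))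
        (LinearMap.ker (Polynomial.aeval θ (f i))) ∧
      ∃ U : Submodule (PowerSeries k) V,
        IsCompl (LinearMap.ker (Polynomial.aeval θ (f 1)) ⊔
          LinearMap.ker (Polynomial.aeval θ (f i))) U := by
  intro i hi hin
  have h1 : 1 ≤ n 1 := hi.le.trans hin
  have hdeg1 : (f 1).natDegree = σ := by
    rw [hdeg 1 le_rfl h1, hμ, Finset.filter_true_of_mem fun l hl =>
      Nat.one_le_iff_ne_zero.2 (hpos l (Finset.mem_Icc.1 hl).1 (Finset.mem_Icc.1 hl).2).ne']
    simp
  have hdegi : 0 < (f i).natDegree ∧ (f i).natDegree ≤ σ := by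
    rw [hdeg i hi.le hin, hμ]
    exact ⟨Finset.card_pos.2 ⟨1, by simp [hσ, hin]⟩, (Finset.card_filter_le _ _).trans (by simp)⟩
  obtain ⟨q, ρ, hfρ, hρ⟩ := exists_eq_mul_add_C_mul_of_isEisensteinAt (hmonic 1 le_rfl h1)
    (hmonic i hi.le hin) (hEis 1 le_rfl h1) (hEis i hi.le hin) hdegi.1 (hdeg1 ▸ hdegi.2)
    (hconst 1 i le_rfl h1 hi.le hin hi.ne).2
  have hρ0 : IsUnit (ρ.coeff 0) := by
    rwa [← IsLocalRing.notMem_maximalIdeal, PowerSeries.maximalIdeal_eq_span_X]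
  have hXjac : PowerSeries.X ∈ Ideal.jacobson (⊥ : Ideal (PowerSeries k)) :=
    IsLocalRing.maximalIdeal_le_jacobson _
      ((PowerSeries.maximalIdeal_eq_span_X (k := k)).symm ▸ Ideal.mem_span_singleton_self _)
  have hθσ : range (θ ^ σ) ≤ (PowerSeries.X : PowerSeries k) • ⊤ :=
    hWσ ▸ range_pow_le_of_map_le hW0 hθ
  have he := bijective_aeval_of_isUnit_coeff_zero hXjac hθσ hρ0
  have hX : IsSMulRegular V (PowerSeries.X : PowerSeries k) := .of_ne_zero PowerSeries.X_ne_zero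
  have hAe (z) (hz : z ∈ ker (aeval θ (f i))) := aeval_apply_eq_smul_of_mem_ker hfρ hz
  have hsup := comap_ker_eq_ker_sup_ker hX (range_aeval_le_smul_top
    (hEis 1 le_rfl h1).isWeaklyEisensteinAt (hmonic 1 le_rfl h1) (hdeg1 ▸ hθσ))
    ((Commute.all _ _).map (aeval θ)) he ((Commute.all _ _).map (aeval θ)) hAe
  refine ⟨Submodule.map_mkQ_ker_eq_ker_mapQ _ hsup.le, disjoint_ker_of_eq_smul hX he.1 hAe, ?_⟩
  rw [← hsup, ← ker_comp]
  exact exists_isCompl_ker _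
end

section
/- Let E be a finite-dimensional vector space over a field k and let θ : E → E be a nilpotent linear endomorphism. For i ≥ 0 set K^i = Ker(θ^i), so that 0 = K⁰ ⊆ K¹ ⊆ ⋯ ⊆ K^{r'} = E for some r'. Then for every linear map ψ : E → E satisfying ψ(K^i) ⊆ K^{i−1} for all i ≥ 1, there exists a linear map φ : E → E satisfying φ(K^i) ⊆ K^i for all i and ψ = θ∘φ − φ∘θ. In other words, ad(θ) maps the parabolic algebra 𝔭 of the flag {K^i} surjectively onto its nilpotent radical 𝔫. -/
open LinearMap Module

section Aux

variable {k : Type*} [Field k] {E : Type*} [AddCommGroup E] [Module k E] [FiniteDimensional k E]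

/-- kernel filtration is monotone, pointwise form -/
private lemma ker_pow_mono (θ : Module.End k E) {i j : ℕ} (h : j ≤ i) {x : E}
    (hx : (θ ^ j) x = 0) : (θ ^ i) x = 0 := by
  obtain ⟨d, rfl⟩ := Nat.exists_eq_add_of_le h
  rw [add_comm, pow_add, Module.End.mul_apply, hx, map_zero]

/-- The parabolic subalgebra of the kernel flag, as a submodule of `End k E`. -/
private def parSub (θ : Module.End k E) : Submodule k (Module.End k E) where
  carrier := {φ | ∀ (i : ℕ) (x : E), (θ ^ i) x = 0 → (θ ^ i) (φ x) = 0}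
  add_mem' := by
    intro a b ha hb i x hx
    rw [LinearMap.add_apply, map_add, ha i x hx, hb i x hx, add_zero]
  zero_mem' := by intro i x hx; simp
  smul_mem' := by
    intro c a ha i x hx
    rw [LinearMap.smul_apply, map_smul, ha i x hx, smul_zero]

/-- Pointwise membership predicate for the nilradical. -/
private def NN (θ ψ : Module.End k E) : Prop :=
  ∀ (i : ℕ) (x : E), (θ ^ (i + 1)) x = 0 → (θ ^ i) (ψ x) = 0

/-- An element of the nilradical is nilpotent. -/
private lemma NN.isNilpotent {θ ψ : Module.End k E} (hθ : IsNilpotent θ) (h : NN θ ψ) :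
    IsNilpotent ψ := by
  obtain ⟨r, hr⟩ := hθ
  have key : ∀ (m : ℕ) (x : E), (θ ^ m) x = 0 → (ψ ^ m) x = 0 := by
    intro m
    induction m with
    | zero => intro x hx; simpa using hx
    | succ n ih =>
        intro x hx
        have h1 : (θ ^ n) (ψ x) = 0 := h n x hx
        have := ih (ψ x) h1
        calc (ψ ^ (n + 1)) x = (ψ ^ n) (ψ x) := by
              rw [pow_succ, Module.End.mul_apply]
          _ = 0 := this
  exact ⟨r, by ext x; exact key r x (by rw [hr]; rfl)⟩

/-- If `θ∘C - C∘θ` lies in the nilradical, then `C` preserves the kernel filtration. -/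
private lemma mem_parSub_of_bracket {θ C : Module.End k E} (h : NN θ (θ * C - C * θ)) :
    C ∈ parSub θ := by
  intro i
  induction i with
  | zero =>
      intro x hx
      simp only [pow_zero, Module.End.one_apply] at hx ⊢
      rw [hx, map_zero]
  | succ n ih =>
      intro x hx
      have hθx : (θ ^ n) (θ x) = 0 := by
        rw [← Module.End.mul_apply, ← pow_succ]
        exact hx
      have h1 : (θ ^ n) (C (θ x)) = 0 := ih (θ x) hθx
      have h2 : (θ ^ n) ((θ * C - C * θ) x) = 0 := h n x hx
      have hsplit : θ (C x) = C (θ x) + (θ * C - C * θ) x := by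
        simp only [LinearMap.sub_apply, Module.End.mul_apply]
        abel
      calc (θ ^ (n + 1)) (C x) = (θ ^ n) (θ (C x)) := by
            rw [pow_succ, Module.End.mul_apply]
        _ = (θ ^ n) (C (θ x)) + (θ ^ n) ((θ * C - C * θ) x) := by rw [hsplit, map_add]
        _ = 0 := by rw [h1, h2, add_zero]

private lemma trace_smulRight' (f : Module.Dual k E) (x : E) :
    trace k E (LinearMap.smulRight f x) = f x := by
  have : LinearMap.smulRight f x = dualTensorHom k E E (f ⊗ₜ[k] x) := by
    ext y; simp [dualTensorHom_apply]
  rw [this, trace_eq_contract_apply, contractLeft_apply]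

/-- If `trace (φ * D) = 0` for all `φ` in the parabolic, then `D` is in the nilradical. -/
private lemma NN_of_trace {θ D : Module.End k E}
    (h : ∀ φ ∈ parSub θ, trace k E (φ * D) = 0) : NN θ D := by
  intro i x hx
  by_contra hne
  have hDx : D x ∉ LinearMap.ker (θ ^ i) := by
    simpa [LinearMap.mem_ker] using hne
  obtain ⟨f, hf1, hf2⟩ :=
    Submodule.exists_dual_map_eq_bot_of_notMem hDx inferInstance
  have hfvanish : ∀ y : E, (θ ^ i) y = 0 → f y = 0 := by
    intro y hy
    have : f y ∈ Submodule.map f (LinearMap.ker (θ ^ i)) :=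
      Submodule.mem_map_of_mem (by simpa [LinearMap.mem_ker] using hy)
    rw [hf2] at this
    simpa using this
  set φ : Module.End k E := LinearMap.smulRight f x with hφdef
  have hφP : φ ∈ parSub θ := by
    intro j y hy
    rcases le_or_gt j i with hji | hij
    · have : f y = 0 := hfvanish y (ker_pow_mono θ hji hy)
      simp [hφdef, this]
    · have hθjx : (θ ^ j) x = 0 := ker_pow_mono θ hij hx
      simp [hφdef, map_smul, hθjx]
  have hcomp : φ * D = LinearMap.smulRight (f ∘ₗ D) x := by
    ext z; simp [hφdef, Module.End.mul_apply]
  have := h φ hφP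
  rw [hcomp, trace_smulRight'] at this
  exact hf1 (by simpa using this)

end Aux

/-- **(Lemma 6.10 of the paper: `ad θ : 𝔭 → 𝔫` is surjective.)**
Let `E` be a finite-dimensional vector space over a field `k` and `θ : E → E` a nilpotent
endomorphism, with kernel filtration `Kⁱ = ker (θ^i)`. Then for every `ψ` with
`ψ(Kⁱ) ⊆ K^{i-1}` for all `i ≥ 1`, there is a `φ` preserving every `Kⁱ` such that
`ψ = θ∘φ - φ∘θ`; i.e. `ad θ` maps the parabolic algebra of the flag `{Kⁱ}` onto its
nilpotent radical. -/
theorem ad_nilpotent_surjective_on_parabolic {k : Type*} [Field k]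
    {E : Type*} [AddCommGroup E] [Module k E] [FiniteDimensional k E]
    (θ : Module.End k E) (hθ : IsNilpotent θ)
    (ψ : Module.End k E)
    (hψ : ∀ i : ℕ, 1 ≤ i →
      Submodule.map ψ (LinearMap.ker (θ ^ i)) ≤ LinearMap.ker (θ ^ (i - 1))) :
    ∃ φ : Module.End k E,
      (∀ i : ℕ, Submodule.map φ (LinearMap.ker (θ ^ i)) ≤ LinearMap.ker (θ ^ i)) ∧
      ψ = θ * φ - φ * θ := by
  classical
  -- `ψ` pointwise lowers the filtration
  have hψ' : NN θ ψ := by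
    intro i x hx
    have hx' : x ∈ LinearMap.ker (θ ^ (i + 1)) := LinearMap.mem_ker.mpr hx
    have := hψ (i + 1) (Nat.le_add_left 1 i) (Submodule.mem_map_of_mem hx')
    simpa [LinearMap.mem_ker] using this
  -- the "ad θ" operator
  set L : Module.End k E →ₗ[k] Module.End k E :=
    LinearMap.mulLeft k θ - LinearMap.mulRight k θ with hL
  have hLapp : ∀ φ : Module.End k E, L φ = θ * φ - φ * θ := by
    intro φ; simp [hL]
  set U : Submodule k (Module.End k E) := Submodule.map L (parSub θ) with hU
  -- the trace pairing
  set T : Module.End k E →ₗ[k] Module.Dual k (Module.End k E) :=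
    LinearMap.mk₂ k (fun A C => LinearMap.trace k E (A * C))
      (fun A A' C => by simp [add_mul])
      (fun c A C => by simp [smul_mul_assoc])
      (fun A C C' => by simp [mul_add])
      (fun c A C => by simp [mul_smul_comm]) with hT
  have hTapp : ∀ A C : Module.End k E, T A C = LinearMap.trace k E (A * C) := by
    intro A C; rfl
  -- the trace pairing is nondegenerate, hence `T` is surjective
  have Tinj : Function.Injective T := by
    rw [← LinearMap.ker_eq_bot, LinearMap.ker_eq_bot']
    intro A hA
    ext y
    rw [LinearMap.zero_apply]
    apply (Module.forall_dual_apply_eq_zero_iff k (A y)).mp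
    intro f
    have h0 : T A (LinearMap.smulRight f y) = 0 := by rw [hA]; rfl
    rw [hTapp] at h0
    have hcomp : A * LinearMap.smulRight f y = LinearMap.smulRight f (A y) := by
      ext z; simp [Module.End.mul_apply]
    rwa [hcomp, trace_smulRight'] at h0
  have Tsurj : Function.Surjective T :=
    (LinearMap.injective_iff_surjective_of_finrank_eq_finrank
      (Subspace.dual_finrank_eq (V := Module.End k E)).symm).mp Tinj
  -- key step: `ψ` is annihilated by every functional vanishing on `U`, so `ψ ∈ U`
  have hψU : ψ ∈ U := by
    apply (Subspace.forall_mem_dualAnnihilator_apply_eq_zero_iff U ψ).mp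
    intro g hg
    obtain ⟨C, rfl⟩ := Tsurj g
    have htr : ∀ φ ∈ parSub θ, LinearMap.trace k E (φ * (C * θ - θ * C)) = 0 := by
      intro φ hφ
      have hu : L φ ∈ U := Submodule.mem_map_of_mem hφ
      have h0 : LinearMap.trace k E (C * (θ * φ - φ * θ)) = 0 := by
        have := ((Submodule.mem_dualAnnihilator _).mp hg) _ hu
        rwa [hTapp, hLapp] at this
      have e1 : LinearMap.trace k E (φ * (C * θ)) = LinearMap.trace k E (C * (θ * φ)) := by
        rw [LinearMap.trace_mul_comm, mul_assoc]
      have e2 : LinearMap.trace k E (φ * (θ * C)) = LinearMap.trace k E (C * (φ * θ)) := by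
        rw [← mul_assoc, LinearMap.trace_mul_comm]
      calc LinearMap.trace k E (φ * (C * θ - θ * C))
          = LinearMap.trace k E (φ * (C * θ)) - LinearMap.trace k E (φ * (θ * C)) := by
            rw [mul_sub, map_sub]
        _ = LinearMap.trace k E (C * (θ * φ)) - LinearMap.trace k E (C * (φ * θ)) := by
            rw [e1, e2]
        _ = LinearMap.trace k E (C * (θ * φ - φ * θ)) := by rw [mul_sub, map_sub]
        _ = 0 := h0
    have hD : NN θ (C * θ - θ * C) := NN_of_trace htr
    have hD' : NN θ (θ * C - C * θ) := by
      intro i x hx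
      have h1 := hD i x hx
      have h2 : θ * C - C * θ = -(C * θ - θ * C) := (neg_sub _ _).symm
      rw [h2, LinearMap.neg_apply, map_neg, h1, neg_zero]
    have hCP : C ∈ parSub θ := mem_parSub_of_bracket hD'
    have hNNψC : NN θ (ψ * C) := by
      intro i x hx
      have : (θ ^ (i + 1)) (C x) = 0 := hCP (i + 1) x hx
      have := hψ' i (C x) this
      simpa [Module.End.mul_apply] using this
    have hn : IsNilpotent (ψ * C) := NN.isNilpotent hθ hNNψC
    have ht0 : LinearMap.trace k E (ψ * C) = 0 :=
      (LinearMap.isNilpotent_trace_of_isNilpotent hn).eq_zero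
    rw [hTapp, LinearMap.trace_mul_comm, ht0]
  obtain ⟨φ, hφP, hφeq⟩ := Submodule.mem_map.mp hψU
  refine ⟨φ, fun i => ?_, ?_⟩
  · intro z hz
    obtain ⟨x, hx, rfl⟩ := Submodule.mem_map.mp hz
    exact LinearMap.mem_ker.mpr (hφP i x (LinearMap.mem_ker.mp hx))
  · rw [← hφeq, hLapp]
end

section
/- Let k be a field, r ≥ 1, and let μ₁ ≥ μ₂ ≥ ⋯ ≥ μ_{n₁} > 0 be a partition of r with conjugate partition n₁ ≥ ⋯ ≥ n_σ (so σ = μ₁). Let à = ∏_{i=1}^{n₁} k[[s_i]], regarded as a k[[t]]-algebra via t ↦ (s_1^{μ₁}, …, s_{n₁}^{μ_{n₁}}), and let λ = (s₁, …, s_{n₁}) ∈ Ã. Then there exists a unique chain of k[[t]]-submodules à = L₀ ⊃ L₁ ⊃ ⋯ ⊃ L_σ = t·à such that λ·L_j ⊆ L_{j+1} for all 0 ≤ j ≤ σ−1 and dim_k(L_{j−1}/L_j) = n_j for all 1 ≤ j ≤ σ; it is given by L_j = λ^j·à + t·Ã. -/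
/-!
Identify `Ã` with `Fin N → k⟦X⟧`, so that `t = (X ^ μᵢ)ᵢ` and `λ = (X)ᵢ`. Then
`L_j = λ^j·Ã + t·Ã` consists of the `x` with `X ^ min j μᵢ ∣ xᵢ` for all `i`, and reading off
the `j`-th coefficient on the components with `j < μᵢ` identifies `L_j / L_{j+1}` with
`k ^ n_{j+1}`. Uniqueness is by induction on `j`: if `L_j` is the standard one, then
`λ·L_j ⊆ L_{j+1}` and `t·Ã = L_σ ⊆ L_{j+1}` give `λ^{j+1}·Ã + t·Ã ⊆ L_{j+1} ⊆ L_j`, and the two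
submodules have the same finite codimension `n_{j+1}` in `L_j`, so they are equal.
-/


/-- The chain condition on `k[[t]]`-submodules of `Ã = ∏_{i=1}^{N} k[[sᵢ]]` appearing in the
normalization step of the parabolic BNR correspondence.  Here `Ã` is realized as
`Fin N → PowerSeries k`, with `k[[t]]`-structure given by a ring homomorphism
`φ : k[[t]] → Ã` (sending `t` to `(s₁^{μ 1}, …, s_N^{μ N})`), so that a `k[[t]]`-submodule
is a `k`-subspace closed under multiplication by every `φ g`.  The condition requires:
`L 0 = Ã`, `L σ = t·Ã`, the chain is strictly decreasing, each `L j` is a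
`k[[t]]`-submodule, `λ·(L j) ⊆ L (j+1)` where `λ = (s₁, …, s_N)`, and
`dim_k (L (j-1) / L j) = n j`. -/
def IsParabolicChain {k : Type*} [Field k] (N σ : ℕ) (n : ℕ → ℕ)
    (φ : PowerSeries k →+* (Fin N → PowerSeries k))
    (L : ℕ → Submodule k (Fin N → PowerSeries k)) : Prop :=
  L 0 = ⊤ ∧
  L σ = Submodule.map (LinearMap.mulLeft k (φ PowerSeries.X)) ⊤ ∧
  (∀ j < σ, L (j + 1) < L j) ∧
  (∀ j ≤ σ, ∀ g : PowerSeries k, ∀ x ∈ L j, φ g * x ∈ L j) ∧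
  (∀ j < σ, ∀ x ∈ L j, (fun _ => PowerSeries.X : Fin N → PowerSeries k) * x ∈ L (j + 1)) ∧
  (∀ j, 1 ≤ j → j ≤ σ →
    Module.finrank k (↥(L (j - 1)) ⧸ (L j).comap (L (j - 1)).subtype) = n j)

open PowerSeries Module

namespace Submodule

variable {K V : Type*} [DivisionRing K] [AddCommGroup V] [Module K V]

theorem eq_of_le_of_finrank_quotient_eq {A B : Submodule K V} (hAB : A ≤ B)
    [FiniteDimensional K (V ⧸ A)] (h : finrank K (V ⧸ A) = finrank K (V ⧸ B)) : A = B := by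
  have hsum := (B.map A.mkQ).finrank_quotient_add_finrank
  rw [(quotientQuotientEquivQuotient A B hAB).finrank_eq, ← h] at hsum
  have hbot : B.map A.mkQ = ⊥ := finrank_eq_zero.1 (by omega)
  have hsup := comap_map_mkQ A B
  rw [hbot, comap_bot, ker_mkQ] at hsup
  exact le_antisymm hAB (sup_eq_left.1 hsup.symm)

theorem not_le_of_finrank_quotient_ne_zero {W W' : Submodule K V}
    (h : finrank K (W ⧸ W'.comap W.subtype) ≠ 0) : ¬ W ≤ W' := by
  intro hle
  rw [comap_subtype_eq_top.2 hle, finrank_zero_of_subsingleton] at h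
  exact h rfl

theorem eq_of_comap_subtype_eq {R M : Type*} [Semiring R] [AddCommMonoid M] [Module R M]
    {p q r : Submodule R M} (hq : q ≤ p) (hr : r ≤ p)
    (h : q.comap p.subtype = r.comap p.subtype) : q = r := by
  have := congrArg (map p.subtype) h
  rwa [map_comap_subtype, map_comap_subtype, inf_eq_right.2 hq, inf_eq_right.2 hr] at this

end Submodule

theorem Pi.mem_map_mulLeft_top_iff {k A ι : Type*} [CommSemiring k] [CommSemiring A]
    [Algebra k A] {c x : ι → A} :
    x ∈ Submodule.map (LinearMap.mulLeft k c) ⊤ ↔ ∀ i, c i ∣ x i := by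
  constructor
  · rintro ⟨y, -, rfl⟩ i
    exact ⟨y i, rfl⟩
  · intro h
    choose y hy using h
    exact ⟨y, trivial, funext fun i => (hy i).symm⟩

theorem PowerSeries.eq_X_pow_of_coeff {k : Type*} [CommSemiring k] {f : k⟦X⟧} {e : ℕ}
    (he : 0 < e) (h : ∀ m, coeff m f = if e ∣ m then coeff (m / e) (X : k⟦X⟧) else 0) :
    f = X ^ e := by
  ext m
  rw [h, coeff_X_pow]
  by_cases hdvd : e ∣ m
  · obtain ⟨c, rfl⟩ := hdvd
    simp [coeff_X, Nat.mul_div_cancel_left _ he, he.ne']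
  · rw [if_neg hdvd, if_neg (by rintro rfl; exact hdvd dvd_rfl)]

theorem Finset.card_filter_Icc_one_eq_card_subtype (N : ℕ) (p : ℕ → Prop) [DecidablePred p] :
    ((Finset.Icc 1 N).filter p).card = Fintype.card {i : Fin N // p (i + 1)} := by
  rw [Fintype.card_subtype]
  symm
  refine Finset.card_nbij (fun i => i.val + 1) (fun i hi => ?_) (fun a _ b _ h => ?_)
    (fun b hb => ?_)
  · simp only [coe_filter, mem_univ, true_and, Set.mem_ofPred_eq] at hi
    simp only [coe_filter, mem_Icc, Set.mem_ofPred_eq]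
    exact ⟨⟨by omega, i.isLt⟩, hi⟩
  · exact Fin.ext (by simpa using h)
  · simp only [coe_filter, mem_Icc, Set.mem_ofPred_eq] at hb
    refine ⟨⟨b - 1, by omega⟩, ?_, by simp only; omega⟩
    simpa [Nat.sub_add_cancel hb.1.1] using hb.2

section ParabolicChain

variable {k ι : Type*}

/-- `λ^j·Ã + t·Ã` inside `Ã = ι → k⟦X⟧`, where `λ = (X)ᵢ` and `t = (X ^ d i)ᵢ`. -/
noncomputable def parabolicChain (k : Type*) [CommSemiring k] (d : ι → ℕ) (j : ℕ) :
    Submodule k (ι → k⟦X⟧) :=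
  Submodule.map (LinearMap.mulLeft k ((fun _ => X : ι → k⟦X⟧) ^ j)) ⊤ ⊔
    Submodule.map (LinearMap.mulLeft k (fun i => (X : k⟦X⟧) ^ d i)) ⊤

section CommSemiring

variable [CommSemiring k] {d : ι → ℕ} {j : ℕ} {x : ι → k⟦X⟧}

theorem mem_parabolicChain :
    x ∈ parabolicChain k d j ↔ ∀ i, (X : k⟦X⟧) ^ min j (d i) ∣ x i := by
  simp only [parabolicChain, Submodule.mem_sup, Pi.mem_map_mulLeft_top_iff, Pi.pow_apply]
  constructor
  · rintro ⟨y, hy, z, hz, rfl⟩ i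
    exact dvd_add ((pow_dvd_pow _ (min_le_left _ _)).trans (hy i))
      ((pow_dvd_pow _ (min_le_right _ _)).trans (hz i))
  · intro h
    refine ⟨fun i => if j ≤ d i then x i else 0, fun i => ?_,
      fun i => if j ≤ d i then 0 else x i, fun i => ?_,
      funext fun i => by simp only [Pi.add_apply]; split_ifs <;> simp⟩
    · dsimp only
      split_ifs with hji
      · simpa [min_eq_left hji] using h i
      · exact dvd_zero _
    · dsimp only
      split_ifs with hji
      · exact dvd_zero _
      · simpa [min_eq_right (le_of_not_ge hji)] using h i

theorem parabolicChain_zero : parabolicChain k d 0 = ⊤ :=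
  eq_top_iff.2 fun x _ => mem_parabolicChain.2 fun i => by simp

theorem parabolicChain_of_le (hd : ∀ i, d i ≤ j) :
    parabolicChain k d j = Submodule.map (LinearMap.mulLeft k (fun i => (X : k⟦X⟧) ^ d i)) ⊤ := by
  ext x
  simp only [mem_parabolicChain, Pi.mem_map_mulLeft_top_iff, min_eq_right (hd _)]

theorem parabolicChain_antitone : Antitone (parabolicChain k d) := fun _ _ hab _ hx =>
  mem_parabolicChain.2 fun i =>
    (pow_dvd_pow _ (min_le_min_right _ hab)).trans (mem_parabolicChain.1 hx i)

theorem mul_mem_parabolicChain (c : ι → k⟦X⟧) (hx : x ∈ parabolicChain k d j) :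
    c * x ∈ parabolicChain k d j :=
  mem_parabolicChain.2 fun i => (mem_parabolicChain.1 hx i).mul_left _

theorem X_mul_mem_parabolicChain_succ (hx : x ∈ parabolicChain k d j) :
    (fun _ => X) * x ∈ parabolicChain k d (j + 1) :=
  mem_parabolicChain.2 fun i =>
    (pow_dvd_pow _ (by omega : min (j + 1) (d i) ≤ min j (d i) + 1)).trans
      (by rw [pow_succ', Pi.mul_apply]; exact mul_dvd_mul_left _ (mem_parabolicChain.1 hx i))

end CommSemiring

section Field

variable [Field k] (d : ι → ℕ) (j : ℕ)

noncomputable def parabolicChainCoeff :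
    parabolicChain k d j →ₗ[k] ({i // j < d i} → k) where
  toFun x p := coeff j (x.1 p.1)
  map_add' _ _ := funext fun _ => by simp
  map_smul' _ _ := funext fun _ => by simp

theorem ker_parabolicChainCoeff :
    LinearMap.ker (parabolicChainCoeff d j) =
      (parabolicChain k d (j + 1)).comap (parabolicChain k d j).subtype := by
  ext ⟨x, hx⟩
  simp only [LinearMap.mem_ker, Submodule.mem_comap, Submodule.subtype_apply, mem_parabolicChain]
  constructor
  · intro h i
    have hxi := mem_parabolicChain.1 hx i
    rw [X_pow_dvd_iff] at hxi ⊢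
    intro m hm
    by_cases hmj : m < min j (d i)
    · exact hxi m hmj
    · obtain rfl : m = j := by omega
      exact congrFun h ⟨i, by omega⟩
  · intro h
    funext p
    exact X_pow_dvd_iff.1 (h p.1) j (by have := p.2; omega)

theorem parabolicChainCoeff_surjective :
    Function.Surjective (parabolicChainCoeff (k := k) d j) := by
  classical
  intro v
  refine ⟨⟨fun i => if h : j < d i then C (v ⟨i, h⟩) * X ^ j else 0,
    mem_parabolicChain.2 fun i => ?_⟩, funext fun p => ?_⟩
  · split_ifs
    · exact (pow_dvd_pow _ (min_le_left _ _)).mul_left _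
    · exact dvd_zero _
  · simp [parabolicChainCoeff, dif_pos p.2]

noncomputable def parabolicChainQuotientEquiv :
    (parabolicChain k d j ⧸ (parabolicChain k d (j + 1)).comap (parabolicChain k d j).subtype)
      ≃ₗ[k] ({i // j < d i} → k) :=
  (Submodule.quotEquivOfEq _ _ (ker_parabolicChainCoeff d j).symm).trans
    ((parabolicChainCoeff d j).quotKerEquivOfSurjective (parabolicChainCoeff_surjective d j))

variable [Fintype ι]

instance : FiniteDimensional k
    (parabolicChain k d j ⧸ (parabolicChain k d (j + 1)).comap (parabolicChain k d j).subtype) :=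
  (parabolicChainQuotientEquiv d j).symm.finiteDimensional

variable {d j}

theorem finrank_parabolicChain_quotient :
    finrank k
      (parabolicChain k d j ⧸ (parabolicChain k d (j + 1)).comap (parabolicChain k d j).subtype) =
      Fintype.card {i // j < d i} :=
  (parabolicChainQuotientEquiv d j).finrank_eq.trans (finrank_fintype_fun_eq_card k)

theorem parabolicChain_succ_lt {i : ι} (hi : j < d i) :
    parabolicChain k d (j + 1) < parabolicChain k d j :=
  lt_of_le_not_ge (parabolicChain_antitone j.le_succ) <|
    Submodule.not_le_of_finrank_quotient_ne_zero <| by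
      rw [finrank_parabolicChain_quotient]
      exact (Fintype.card_pos_iff.2 ⟨⟨i, hi⟩⟩).ne'

end Field

end ParabolicChain

section IsParabolicChain

variable {k : Type*} [Field k] {N σ : ℕ} {n : ℕ → ℕ} {φ : k⟦X⟧ →+* (Fin N → k⟦X⟧)} {d : Fin N → ℕ}

theorem isParabolicChain_parabolicChain (hφ : φ X = fun i => X ^ d i) (hd : ∀ i, d i ≤ σ)
    {i₀ : Fin N} (hi₀ : d i₀ = σ) (hn : ∀ j, n j = Fintype.card {i // j ≤ d i}) :
    IsParabolicChain N σ n φ (parabolicChain k d) := by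
  refine ⟨parabolicChain_zero, by rw [hφ, parabolicChain_of_le hd],
    fun j hj => parabolicChain_succ_lt (i := i₀) (by omega),
    fun j _ g x hx => mul_mem_parabolicChain _ hx,
    fun j _ x hx => X_mul_mem_parabolicChain_succ hx,
    fun j hj _ => ?_⟩
  obtain ⟨j, rfl⟩ := Nat.exists_eq_add_of_le' hj
  rw [Nat.add_sub_cancel, finrank_parabolicChain_quotient, hn]
  rfl

theorem IsParabolicChain.eq_parabolicChain {L : ℕ → Submodule k (Fin N → k⟦X⟧)}
    (hL : IsParabolicChain N σ n φ L) (hφ : φ X = fun i => X ^ d i)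
    (hn : ∀ j, n j = Fintype.card {i // j ≤ d i}) :
    ∀ j ≤ σ, L j = parabolicChain k d j := by
  obtain ⟨hL0, hLσ, hLlt, -, hLlam, hLdim⟩ := hL
  have hLσ_le : ∀ j ≤ σ, L σ ≤ L j := fun j hj =>
    Nat.le_induction (P := fun m _ => m ≤ σ → L m ≤ L j) (fun _ => le_rfl)
      (fun m _ ih hm => (hLlt m (by omega)).le.trans (ih (by omega))) σ hj le_rfl
  have hlam_pow : ∀ j ≤ σ, ∀ a, (fun _ => X : Fin N → k⟦X⟧) ^ j * a ∈ L j := by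
    intro j
    induction j with
    | zero => simp [hL0]
    | succ j ih =>
      intro hj a
      rw [pow_succ', mul_assoc]
      exact hLlam j hj _ (ih (by omega) a)
  intro j hj
  induction j with
  | zero => rw [hL0, parabolicChain_zero]
  | succ j ih =>
    have hLj := ih (by omega)
    have hge : parabolicChain k d (j + 1) ≤ L (j + 1) :=
      sup_le (by rintro _ ⟨a, -, rfl⟩; exact hlam_pow _ hj a)
        (by rw [← hφ, ← hLσ]; exact hLσ_le _ hj)
    have hle : L (j + 1) ≤ parabolicChain k d j := hLj ▸ (hLlt j hj).le
    have hdim : finrank k (parabolicChain k d j ⧸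
          (parabolicChain k d (j + 1)).comap (parabolicChain k d j).subtype) =
        finrank k (parabolicChain k d j ⧸ (L (j + 1)).comap (parabolicChain k d j).subtype) := by
      have := hLdim (j + 1) (by omega) hj
      rw [Nat.add_sub_cancel, hLj, hn] at this
      rw [this, finrank_parabolicChain_quotient]
      rfl
    exact (Submodule.eq_of_comap_subtype_eq (parabolicChain_antitone j.le_succ) hle
      (Submodule.eq_of_le_of_finrank_quotient_eq (Submodule.comap_mono hge) hdim)).symm

end IsParabolicChain

theorem parabolic_chain_exists_unique_general {k : Type*} [Field k]
    (N σ : ℕ) (hN : 1 ≤ N)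
    (μ : ℕ → ℕ)
    (hanti : ∀ i j, 1 ≤ i → i ≤ j → j ≤ N → μ j ≤ μ i)
    (hpos : ∀ i, 1 ≤ i → i ≤ N → 0 < μ i)
    (hσ : σ = μ 1)
    (n : ℕ → ℕ)
    (hn : ∀ j, n j = ((Finset.Icc 1 N).filter (fun i => j ≤ μ i)).card)
    (φ : PowerSeries k →+* (Fin N → PowerSeries k))
    (hφ : ∀ (g : PowerSeries k) (i : Fin N) (m : ℕ),
      PowerSeries.coeff m (φ g i) =
        if μ (i.val + 1) ∣ m then PowerSeries.coeff (m / μ (i.val + 1)) g else 0) :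
    (∃ L : ℕ → Submodule k (Fin N → PowerSeries k), IsParabolicChain N σ n φ L) ∧
    ∀ L : ℕ → Submodule k (Fin N → PowerSeries k), IsParabolicChain N σ n φ L →
      ∀ j ≤ σ, L j =
        Submodule.map
          (LinearMap.mulLeft k ((fun _ => PowerSeries.X : Fin N → PowerSeries k) ^ j)) ⊤ ⊔
        Submodule.map (LinearMap.mulLeft k (φ PowerSeries.X)) ⊤ := by
  set d : Fin N → ℕ := fun i => μ (i.val + 1)
  have hφX : φ X = fun i => X ^ d i :=
    funext fun i => eq_X_pow_of_coeff (hpos _ (by omega) (by omega)) (hφ X i)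
  have hd : ∀ i, d i ≤ σ := fun i => hσ ▸ hanti 1 _ le_rfl (by omega) (by omega)
  have hn' : ∀ j, n j = Fintype.card {i // j ≤ d i} := fun j =>
    (hn j).trans (Finset.card_filter_Icc_one_eq_card_subtype N _)
  refine ⟨⟨_, isParabolicChain_parabolicChain hφX hd (i₀ := ⟨0, hN⟩) hσ.symm hn'⟩,
    fun L hL j hj => ?_⟩
  rw [hφX]
  exact hL.eq_parabolicChain hφX hn' j hj

/-- **(Lemma used in the proof of the parabolic BNR correspondence, Theorem 4.5:
the canonical filtration on the normalized local ring.)**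
Let `k` be a field and `μ 1 ≥ ⋯ ≥ μ N > 0` a partition of `r` with conjugate partition `n`
(so `σ = μ 1`).  Let `Ã = ∏_{i=1}^{N} k[[sᵢ]]`, a `k[[t]]`-algebra via
`t ↦ (s₁^{μ 1}, …, s_N^{μ N})` (the homomorphism `φ`, characterized on coefficients by
`hφ`), and let `λ = (s₁, …, s_N) ∈ Ã`.  Then there is a unique chain of `k[[t]]`-submodules
`Ã = L 0 ⊃ L 1 ⊃ ⋯ ⊃ L σ = t·Ã` with `λ·(L j) ⊆ L (j+1)` and
`dim_k (L (j-1)/L j) = n j`; it is given by `L j = λ^j·Ã + t·Ã`. -/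
theorem parabolic_chain_exists_unique {k : Type*} [Field k]
    (r N σ : ℕ) (hr : 1 ≤ r) (hN : 1 ≤ N)
    (μ : ℕ → ℕ)
    (hanti : ∀ i j, 1 ≤ i → i ≤ j → j ≤ N → μ j ≤ μ i)
    (hpos : ∀ i, 1 ≤ i → i ≤ N → 0 < μ i)
    (hsum : ∑ i ∈ Finset.Icc 1 N, μ i = r)
    (hσ : σ = μ 1)
    (n : ℕ → ℕ)
    (hn : ∀ j, n j = ((Finset.Icc 1 N).filter (fun i => j ≤ μ i)).card)
    (φ : PowerSeries k →+* (Fin N → PowerSeries k))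
    (hφ : ∀ (g : PowerSeries k) (i : Fin N) (m : ℕ),
      PowerSeries.coeff m (φ g i) =
        if μ (i.val + 1) ∣ m then PowerSeries.coeff (m / μ (i.val + 1)) g else 0) :
    (∃ L : ℕ → Submodule k (Fin N → PowerSeries k), IsParabolicChain N σ n φ L) ∧
    ∀ L : ℕ → Submodule k (Fin N → PowerSeries k), IsParabolicChain N σ n φ L →
      ∀ j ≤ σ, L j =
        Submodule.map
          (LinearMap.mulLeft k ((fun _ => PowerSeries.X : Fin N → PowerSeries k) ^ j)) ⊤ ⊔
        Submodule.map (LinearMap.mulLeft k (φ PowerSeries.X)) ⊤ :=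
  parabolic_chain_exists_unique_general N σ hN μ hanti hpos hσ n hn φ hφ
end
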